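/- Let l ≥ 1 be an integer. Then for every n ∈ {1,…,l} one has |C_n| < 10(l+1). -/

import Mathlib

/-!
Write `θ = π/(l+1)`. Since `m ≡ n (mod 2)`, both `p = (m+n)/2` and `q = (m-n)/2` are integers with
`0 < |p|, |q| < l+1`, so `cos(mθ) - cos(nθ) = -2 sin(pθ) sin(qθ)` has absolute value at least
`2 sin²θ`, because `sin` is concave on `[0, π]`. Together with `sin²(nθ) ≤ n² sin²θ` the factors
`sin²θ` cancel, each of the at most `l` summands contributes at most `n²/(l+1)²`, and
`|C_n| ≤ n² l/(l+1)² < l+1`.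
-/

open Real Finset

/-- The constant `C_n` for `1 ≤ n ≤ l`. -/
noncomputable def Cc (l n : ℕ) : ℝ :=
  (2/((l : ℝ)+1)^2) * Real.sin (π*n/(l+1))^2 *
    ∑ m ∈ (Finset.Icc 1 l).filter (fun m => m ≠ n ∧ m % 2 = n % 2),
      Real.sin (π*m/(l+1))^2 / (Real.cos (π*m/(l+1)) - Real.cos (π*n/(l+1)))

namespace Real

lemma abs_sin_nat_mul_le (k : ℕ) (x : ℝ) : |sin (k * x)| ≤ k * |sin x| := by
  induction k with
  | zero => simp
  | succ k ih =>
    calc |sin ((k + 1 : ℕ) * x)| = |sin (k * x) * cos x + cos (k * x) * sin x| := by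
          push_cast; rw [add_mul, one_mul, sin_add]
      _ ≤ |sin (k * x)| * |cos x| + |cos (k * x)| * |sin x| := by
          rw [← abs_mul, ← abs_mul]; exact abs_add_le _ _
      _ ≤ |sin (k * x)| * 1 + 1 * |sin x| := by
          gcongr <;> exact abs_cos_le_one _
      _ ≤ (k + 1 : ℕ) * |sin x| := by push_cast; linarith

lemma sin_le_sin_of_le_of_le_pi_sub {a x : ℝ} (ha : 0 ≤ a) (hax : a ≤ x) (hxa : x ≤ π - a) :
    sin a ≤ sin x := by
  have h := strictConcaveOn_sin_Icc.concaveOn.min_le_of_mem_Icc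
    (⟨ha, by linarith⟩ : a ∈ Set.Icc 0 π) (⟨by linarith, by linarith⟩ : π - a ∈ Set.Icc 0 π)
    ⟨hax, hxa⟩
  rwa [sin_pi_sub, min_self] at h

lemma sin_pi_div_le_abs_sin_int_mul {N : ℕ} {k : ℤ} (hk : k ≠ 0) (hkN : |k| < N) :
    sin (π / N) ≤ |sin (k * (π / N))| := by
  have hj : 0 < k.natAbs := Int.natAbs_pos.mpr hk
  have hjN : k.natAbs + 1 ≤ N := by
    rw [Int.abs_eq_natAbs] at hkN; omega
  have hN : (0 : ℝ) < N := by exact_mod_cast (by omega : 0 < N)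
  have hsin : sin (π / N) ≤ sin (k.natAbs * (π / N)) := by
    have hj' : (1 : ℝ) ≤ k.natAbs := by exact_mod_cast hj
    have hjN' : (k.natAbs : ℝ) + 1 ≤ N := by exact_mod_cast hjN
    apply sin_le_sin_of_le_of_le_pi_sub (by positivity)
    · exact le_mul_of_one_le_left (by positivity) hj'
    · rw [le_sub_iff_add_le, ← add_one_mul, mul_div_assoc', div_le_iff₀ hN]
      nlinarith [pi_pos]
  rcases Int.natAbs_eq k with hk' | hk' <;> rw [hk']
  · exact hsin.trans (le_abs_self _)
  · rw [Int.cast_neg, neg_mul, sin_neg, abs_neg]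
    exact hsin.trans (le_abs_self _)

lemma two_mul_sin_pi_div_sq_le_abs_cos_sub_cos {N : ℕ} {p q : ℤ} (hp : p ≠ 0) (hpN : |p| < N)
    (hq : q ≠ 0) (hqN : |q| < N) :
    2 * sin (π / N) ^ 2 ≤ |cos ((p + q) * (π / N)) - cos ((p - q) * (π / N))| := by
  have hN : (1 : ℝ) ≤ N := by exact_mod_cast (abs_pos.mpr hp).trans hpN
  have hsin_nonneg : 0 ≤ sin (π / N) :=
    sin_nonneg_of_nonneg_of_le_pi (by positivity) (div_le_self pi_pos.le hN)
  have hcos : cos ((p + q) * (π / N)) - cos ((p - q) * (π / N))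
      = -2 * sin (p * (π / N)) * sin (q * (π / N)) := by
    rw [add_mul, sub_mul, cos_add, cos_sub]; ring
  rw [hcos, abs_mul, abs_mul, abs_neg, abs_two, sq, mul_assoc]
  gcongr
  · exact sin_pi_div_le_abs_sin_int_mul hp hpN
  · exact sin_pi_div_le_abs_sin_int_mul hq hqN

end Real

lemma two_mul_sin_sq_mul_abs_summand_le_one {l n m : ℕ} (hn : n ≤ l) (hm : m ≤ l)
    (hmn : m ≠ n) (hpar : m % 2 = n % 2) :
    2 * sin (π / (l + 1)) ^ 2 *
        |sin (π * m / (l + 1)) ^ 2 / (cos (π * m / (l + 1)) - cos (π * n / (l + 1)))| ≤ 1 := by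
  obtain ⟨p, q, hmpq, hnpq⟩ : ∃ p q : ℤ, (m : ℤ) = p + q ∧ (n : ℤ) = p - q :=
    ⟨(m + n) / 2, (m - n) / 2, by omega, by omega⟩
  have hden := two_mul_sin_pi_div_sq_le_abs_cos_sub_cos (N := l + 1) (p := p) (q := q)
    (by omega) (by rw [abs_lt]; push_cast; omega) (by omega) (by rw [abs_lt]; push_cast; omega)
  have hangle {k : ℕ} {r : ℝ} (hkr : (k : ℝ) = r) : π * k / (l + 1) = r * (π / (l + 1 : ℕ)) := by
    rw [hkr]; push_cast; ring
  rw [← hangle (by exact_mod_cast hmpq), ← hangle (by exact_mod_cast hnpq), Nat.cast_add_one]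
    at hden
  rw [abs_div, ← mul_div_assoc]
  apply div_le_of_le_mul₀ (abs_nonneg _) zero_le_one
  rw [one_mul, abs_sq]
  exact (mul_le_mul hden (sin_sq_le_one _) (sq_nonneg _) (abs_nonneg _)).trans_eq (mul_one _)

lemma abs_Cc_le {l n : ℕ} (hn : n ≤ l) : |Cc l n| ≤ n ^ 2 * l / ((l : ℝ) + 1) ^ 2 := by
  set s := sin (π / (l + 1))
  have hsum : 2 * s ^ 2 * |∑ m ∈ (Icc 1 l).filter (fun m => m ≠ n ∧ m % 2 = n % 2),
      sin (π * m / (l + 1)) ^ 2 / (cos (π * m / (l + 1)) - cos (π * n / (l + 1)))| ≤ l := by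
    calc _ ≤ ∑ m ∈ (Icc 1 l).filter (fun m => m ≠ n ∧ m % 2 = n % 2),
          2 * s ^ 2 *
            |sin (π * m / (l + 1)) ^ 2 / (cos (π * m / (l + 1)) - cos (π * n / (l + 1)))| := by
          rw [← mul_sum]; gcongr; exact abs_sum_le_sum_abs _ _
      _ ≤ ∑ m ∈ (Icc 1 l).filter (fun m => m ≠ n ∧ m % 2 = n % 2), (1 : ℝ) := by
          apply sum_le_sum
          intro m hm
          simp only [mem_filter, mem_Icc] at hm
          exact two_mul_sin_sq_mul_abs_summand_le_one hn hm.1.2 hm.2.1 hm.2.2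
      _ ≤ l := by
          rw [sum_const, nsmul_one]
          exact_mod_cast (card_filter_le _ _).trans (by simp)
  have hnum : sin (π * n / (l + 1)) ^ 2 ≤ n ^ 2 * s ^ 2 := by
    have h := pow_le_pow_left₀ (abs_nonneg _) (abs_sin_nat_mul_le n (π / (l + 1))) 2
    rwa [sq_abs, mul_pow, sq_abs, ← mul_div_assoc, mul_comm (n : ℝ)] at h
  rw [Cc, abs_mul, abs_mul, abs_sq, abs_of_nonneg (by positivity)]
  calc 2 / ((l : ℝ) + 1) ^ 2 * sin (π * n / (l + 1)) ^ 2 * |_|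
      ≤ 2 / ((l : ℝ) + 1) ^ 2 * (n ^ 2 * s ^ 2) * |_| := by gcongr
    _ = n ^ 2 / ((l : ℝ) + 1) ^ 2 * (2 * s ^ 2 * |_|) := by ring
    _ ≤ n ^ 2 / ((l : ℝ) + 1) ^ 2 * l := by gcongr
    _ = n ^ 2 * l / ((l : ℝ) + 1) ^ 2 := by ring

theorem stmt_13 (l : ℕ) (n : ℕ) (hn : n ∈ Finset.Icc 1 l) :
    |Cc l n| < 10 * ((l : ℝ) + 1) := by
  have hnl : n ≤ l := (Finset.mem_Icc.mp hn).2
  have hnl' : (n : ℝ) ≤ l := by exact_mod_cast hnl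
  calc |Cc l n| ≤ n ^ 2 * l / ((l : ℝ) + 1) ^ 2 := abs_Cc_le hnl
    _ ≤ l ^ 2 * l / ((l : ℝ) + 1) ^ 2 := by gcongr
    _ < 10 * ((l : ℝ) + 1) := by
      rw [div_lt_iff₀ (by positivity)]
      nlinarith [(Nat.cast_nonneg l : (0 : ℝ) ≤ l)]
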